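/- Under the assumptions of Proposition 1, define the intermediate energy E_t(x_t) := -(1/k) · log( E_{q_t(x_0|x_t)}[exp(-k E_0(x_0))] ). Then p_t(x_t) = q_t(x_t) · exp(-k E_t(x_t)) / Z, i.e. the intermediate marginal is proportional to q_t(x_t) exp(-k E_t(x_t)). -/

import Mathlib

open MeasureTheory Real

theorem exp_neg_mul_neg_inv_mul_log {k I : ℝ} (hk : k ≠ 0) (hI : 0 < I) :
    exp (-k * (-(1 / k) * log I)) = I := by
  rw [show -k * (-(1 / k) * log I) = log I by field_simp, exp_log hI]

theorem stmt1_general {n : ℕ}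
    (q0 E0 : EuclideanSpace ℝ (Fin n) → ℝ) (k : ℝ) (hk : 0 < k)
    (qker : EuclideanSpace ℝ (Fin n) → EuclideanSpace ℝ (Fin n) → ℝ)
    (Z : ℝ)
    (p0 : EuclideanSpace ℝ (Fin n) → ℝ)
    (hp0 : ∀ x, p0 x = q0 x * exp (-k * E0 x) / Z)
    (xt : EuclideanSpace ℝ (Fin n))
    (qt : ℝ) (hqtpos : 0 < qt)
    -- the inner posterior expectation is strictly positive
    (hpos : 0 < ∫ x0, (qker xt x0 * q0 x0 / qt) * exp (-k * E0 x0))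
    (Et : ℝ)
    (hEt : Et = -(1 / k) * Real.log (∫ x0, (qker xt x0 * q0 x0 / qt) * exp (-k * E0 x0))) :
    (∫ x0, qker xt x0 * p0 x0) = qt * exp (-k * Et) / Z := by
  have hposterior : ∫ x0, (qker xt x0 * q0 x0 / qt) * exp (-k * E0 x0)
      = (∫ x0, qker xt x0 * q0 x0 * exp (-k * E0 x0)) / qt := by
    rw [← integral_div]
    congr 1 with x0
    ring
  have hmarginal : ∫ x0, qker xt x0 * p0 x0
      = (∫ x0, qker xt x0 * q0 x0 * exp (-k * E0 x0)) / Z := by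
    rw [← integral_div]
    congr 1 with x0
    rw [hp0]
    ring
  rw [hEt, exp_neg_mul_neg_inv_mul_log hk.ne' hpos, hposterior, hmarginal]
  field_simp

/-- Proposition 1, energy form: `p_t(x_t) = q_t(x_t) exp(-k E_t(x_t)) / Z`. -/
theorem stmt1 {n : ℕ}
    (q0 E0 : EuclideanSpace ℝ (Fin n) → ℝ) (k : ℝ) (hk : 0 < k)
    (hq0 : ∀ x, 0 ≤ q0 x) (hq0int : ∫ x, q0 x = 1)
    (hE0 : Measurable E0)
    (qker : EuclideanSpace ℝ (Fin n) → EuclideanSpace ℝ (Fin n) → ℝ)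
    (Z : ℝ) (hZ : Z = ∫ x, q0 x * exp (-k * E0 x)) (hZpos : 0 < Z)
    (p0 : EuclideanSpace ℝ (Fin n) → ℝ)
    (hp0 : ∀ x, p0 x = q0 x * exp (-k * E0 x) / Z)
    (xt : EuclideanSpace ℝ (Fin n))
    (qt : ℝ) (hqt : qt = ∫ x0, qker xt x0 * q0 x0) (hqtpos : 0 < qt)
    (hint : Integrable (fun x0 => qker xt x0 * q0 x0 * exp (-k * E0 x0)))
    -- the inner posterior expectation is strictly positive
    (hpos : 0 < ∫ x0, (qker xt x0 * q0 x0 / qt) * exp (-k * E0 x0))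
    (Et : ℝ)
    (hEt : Et = -(1 / k) * Real.log (∫ x0, (qker xt x0 * q0 x0 / qt) * exp (-k * E0 x0))) :
    (∫ x0, qker xt x0 * p0 x0) = qt * exp (-k * Et) / Z :=
  stmt1_general q0 E0 k hk qker Z p0 hp0 xt qt hqtpos hpos Et hEt
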